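/- There is no universal probabilistic masker: for r ≥ 2, there is no injective linear map L : H_A ⊗ H_B → H_A ⊗ H_B and fixed unit |b⟩ ∈ H_B and density matrices ρ_A, ρ_B such that for every unit |a⟩ ∈ H_A, the normalized vector L(|a⟩⊗|b⟩)/‖L(|a⟩⊗|b⟩)‖ has partial traces equal to ρ_A and ρ_B. -/

import Mathlib

open Matrix Complex
open scoped ComplexOrder Classical

noncomputable def matSqrt {n : Type*} [Fintype n] [DecidableEq n]
    (A : Matrix n n ℂ) : Matrix n n ℂ :=
  if h : A.PosSemidef then (h.1.eigenvectorUnitary : Matrix n n ℂ) *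
    diagonal ((↑) ∘ (Real.sqrt ·) ∘ h.1.eigenvalues) * (star (h.1.eigenvectorUnitary : Matrix n n ℂ)) else 0

noncomputable def traceNorm {m n : Type*} [Fintype m] [Fintype n] [DecidableEq n]
    (A : Matrix m n ℂ) : ℝ :=
  ((matSqrt (Aᴴ * A)).trace).re

noncomputable def frobNorm {m n : Type*} [Fintype m] [Fintype n]
    (A : Matrix m n ℂ) : ℝ :=
  Real.sqrt (((Aᴴ * A).trace).re)

noncomputable def fidelity {n : Type*} [Fintype n] [DecidableEq n]
    (P Q : Matrix n n ℂ) : ℝ :=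
  ((matSqrt (matSqrt P * Q * matSqrt P)).trace).re

/-- The outer product |ψ⟩⟨ψ| of a vector. -/
noncomputable def outerMat {ι : Type*} (ψ : ι → ℂ) : Matrix ι ι ℂ :=
  fun p q => ψ p * (starRingEnd ℂ) (ψ q)

/-- Partial trace over the first (A) factor. -/
noncomputable def ptraceA {r s : ℕ} (ρ : Matrix (Fin r × Fin s) (Fin r × Fin s) ℂ) :
    Matrix (Fin s) (Fin s) ℂ :=
  fun k l => ∑ i : Fin r, ρ (i, k) (i, l)

/-- Partial trace over the second (B) factor. -/
noncomputable def ptraceB {r s : ℕ} (ρ : Matrix (Fin r × Fin s) (Fin r × Fin s) ℂ) :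
    Matrix (Fin r) (Fin r) ℂ :=
  fun i j => ∑ k : Fin s, ρ (i, k) (j, k)

/-!
Write the image of `a ⊗ b` as an `r × s` matrix `A a`, linear and injective in `a`. Masking says
that `A a * (A a)ᴴ` is always a multiple of `ρA` and `(A a)ᴴ * A a` a multiple of `ρBᵀ`. By
polarization `A x * (A y)ᴴ` is then a multiple of `ρA` for all `x, y`, so for fixed `y ≠ 0` the
linear map `x ↦ A x * (A y)ᴴ` has rank at most one and, as `r ≥ 2`, kills some `x ≠ 0`. Hence
`A y * ((A x)ᴴ * A x) = 0`; since `(A y)ᴴ * A y` is proportional to the nonzero matrix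
`(A x)ᴴ * A x`, also `A y * ((A y)ᴴ * A y) = 0`, which forces `A y = 0`.
-/

open Module

lemma sum_norm_sq_eq_norm_toLp_sq {ι : Type*} [Fintype ι] (a : ι → ℂ) :
    ∑ i, ‖a i‖ ^ 2 = ‖WithLp.toLp 2 a‖ ^ 2 :=
  (EuclideanSpace.norm_sq_eq _).symm

lemma mem_of_forall_sum_norm_sq_eq_one {ι M : Type*} [Fintype ι] [AddCommGroup M] [Module ℂ M]
    {S : Submodule ℂ M} (g : (ι → ℂ) → M) (hg : ∀ (c : ℂ) a, g (c • a) = (c * star c) • g a)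
    (h : ∀ a, ∑ i, ‖a i‖ ^ 2 = 1 → g a ∈ S) (a : ι → ℂ) : g a ∈ S := by
  by_cases ha : a = 0
  · rw [ha, show g 0 = 0 by simpa using hg 0 0]
    exact S.zero_mem
  have hx : WithLp.toLp 2 a ≠ 0 := by simpa using ha
  have hunit : ∑ i, ‖(((‖WithLp.toLp 2 a‖ : ℂ)⁻¹ • a) i)‖ ^ 2 = 1 := by
    rw [sum_norm_sq_eq_norm_toLp_sq, WithLp.toLp_smul]
    exact (congrArg (· ^ 2) (norm_smul_inv_norm (𝕜 := ℂ) hx)).trans (one_pow 2)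
  have ht : (‖WithLp.toLp 2 a‖ : ℂ) • (‖WithLp.toLp 2 a‖ : ℂ)⁻¹ • a = a := by
    rw [smul_smul, mul_inv_cancel₀ (by simpa using hx), one_smul]
  rw [← ht, hg]
  exact S.smul_mem _ (h _ hunit)

section Gram

variable {V m n : Type*} [AddCommGroup V] [Module ℂ V] [Fintype n]

lemma mul_conjTranspose_mem_of_forall_self_mem (A : V →ₗ[ℂ] Matrix m n ℂ)
    {S : Submodule ℂ (Matrix m m ℂ)} (h : ∀ x, A x * (A x)ᴴ ∈ S) (x y : V) :
    A x * (A y)ᴴ ∈ S := by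
  set G := fun z => A z * (A z)ᴴ
  have polarization : (2 : ℂ) • (A x * (A y)ᴴ) =
      (G (x + y) - G x - G y) + I • (G (x + I • y) - G x - G y) := by
    simp only [G, map_add, map_smul, conjTranspose_add, conjTranspose_smul, Matrix.add_mul,
      Matrix.mul_add, Matrix.smul_mul, Matrix.mul_smul, star_def, conj_I, smul_add, smul_sub,
      smul_smul, mul_neg, neg_mul, I_mul_I, neg_neg, mul_one]
    module
  have hG (z : V) : G (x + z) - G x - G y ∈ S := S.sub_mem (S.sub_mem (h _) (h x)) (h y)
  have := S.add_mem (hG y) (S.smul_mem I (hG (I • y)))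
  rw [← polarization] at this
  exact (S.smul_mem_iff two_ne_zero).mp this

lemma exists_ne_zero_mul_conjTranspose_eq_zero [FiniteDimensional ℂ V] [Fintype m]
    (hV : 2 ≤ finrank ℂ V) (A : V →ₗ[ℂ] Matrix m n ℂ) (P : Matrix m m ℂ)
    (hP : ∀ x, A x * (A x)ᴴ ∈ ℂ ∙ P) (y : V) : ∃ x ≠ 0, A x * (A y)ᴴ = 0 := by
  let T := (mulRightLinearMap m ℂ (A y)ᴴ ∘ₗ A).codRestrict (ℂ ∙ P)
    (mul_conjTranspose_mem_of_forall_self_mem A hP · y)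
  have hT : finrank ℂ (ℂ ∙ P) < finrank ℂ V := by
    have : finrank ℂ (ℂ ∙ P) ≤ 1 := by
      simpa using finrank_span_le_card (R := ℂ) ({P} : Set (Matrix m m ℂ))
    omega
  obtain ⟨x, hx, hx0⟩ :=
    Submodule.exists_mem_ne_zero_of_ne_bot (LinearMap.ker_ne_bot_of_finrank_lt hT)
  exact ⟨x, hx0, congrArg Subtype.val (LinearMap.mem_ker.mp hx : T x = 0)⟩

theorem false_of_forall_mul_conjTranspose_mem_span [FiniteDimensional ℂ V] [Fintype m]
    (hV : 2 ≤ finrank ℂ V) (A : V →ₗ[ℂ] Matrix m n ℂ) (hA : Function.Injective A)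
    (P : Matrix m m ℂ) (Q : Matrix n n ℂ) (hP : ∀ x, A x * (A x)ᴴ ∈ ℂ ∙ P)
    (hQ : ∀ x, (A x)ᴴ * A x ∈ ℂ ∙ Q) : False := by
  have hA0 (x : V) (hx : x ≠ 0) : A x ≠ 0 := fun h => hx ((injective_iff_map_eq_zero A).1 hA x h)
  have : Nontrivial V := nontrivial_of_finrank_pos (R := ℂ) (by omega)
  obtain ⟨y, hy⟩ := exists_ne (0 : V)
  obtain ⟨x, hx, hxy⟩ := exists_ne_zero_mul_conjTranspose_eq_zero hV A P hP y
  have hyx : A y * ((A x)ᴴ * A x) = 0 := by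
    rw [mul_conjTranspose_mul_self_eq_zero, ← conjTranspose_conjTranspose (A y),
      ← conjTranspose_mul, hxy, conjTranspose_zero]
  obtain ⟨c, hc⟩ := Submodule.mem_span_singleton.1 (hQ x)
  obtain ⟨d, hd⟩ := Submodule.mem_span_singleton.1 (hQ y)
  have hc0 : c ≠ 0 := by
    rintro rfl
    exact hA0 x hx (conjTranspose_mul_self_eq_zero.1 (by rw [← hc, zero_smul]))
  have hyQ : A y * Q = 0 := by
    rw [← hc, Matrix.mul_smul] at hyx
    exact (smul_eq_zero_iff_right hc0).1 hyx
  have hyy : A y * ((A y)ᴴ * A y) = 0 := by rw [← hd, Matrix.mul_smul, hyQ, smul_zero]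
  rw [mul_conjTranspose_mul_self_eq_zero, self_mul_conjTranspose_eq_zero] at hyy
  exact hA0 y hy hyy

end Gram

lemma ptraceB_smul {r s : ℕ} (c : ℂ) (ρ : Matrix (Fin r × Fin s) (Fin r × Fin s) ℂ) :
    ptraceB (c • ρ) = c • ptraceB ρ := by
  ext i j
  simp [ptraceB, Finset.mul_sum]

lemma ptraceA_smul {r s : ℕ} (c : ℂ) (ρ : Matrix (Fin r × Fin s) (Fin r × Fin s) ℂ) :
    ptraceA (c • ρ) = c • ptraceA ρ := by
  ext k l
  simp [ptraceA, Finset.mul_sum]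

lemma ptraceB_outerMat {r s : ℕ} (φ : Fin r × Fin s → ℂ) :
    ptraceB (outerMat φ) = of (Function.curry φ) * (of (Function.curry φ))ᴴ := by
  ext i j
  simp [ptraceB, outerMat, mul_apply]

lemma ptraceA_outerMat {r s : ℕ} (φ : Fin r × Fin s → ℂ) :
    ptraceA (outerMat φ) = ((of (Function.curry φ))ᴴ * of (Function.curry φ))ᵀ := by
  ext k l
  simp [ptraceA, outerMat, mul_apply, mul_comm]

lemma mem_span_of_ptrace_inv_smul_outerMat_eq {r s : ℕ} (φ : Fin r × Fin s → ℂ)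
    {ρA : Matrix (Fin r) (Fin r) ℂ} {ρB : Matrix (Fin s) (Fin s) ℂ}
    (hA : ptraceB (((∑ p, ‖φ p‖ ^ 2 : ℝ) : ℂ)⁻¹ • outerMat φ) = ρA)
    (hB : ptraceA (((∑ p, ‖φ p‖ ^ 2 : ℝ) : ℂ)⁻¹ • outerMat φ) = ρB) :
    of (Function.curry φ) * (of (Function.curry φ))ᴴ ∈ ℂ ∙ ρA ∧
      (of (Function.curry φ))ᴴ * of (Function.curry φ) ∈ ℂ ∙ ρBᵀ := by
  by_cases hφ : φ = 0
  · subst hφ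
    have : of (Function.curry (0 : Fin r × Fin s → ℂ)) = 0 := rfl
    simp [this]
  have hc : ((∑ p, ‖φ p‖ ^ 2 : ℝ) : ℂ) ≠ 0 := by
    rw [sum_norm_sq_eq_norm_toLp_sq]
    exact_mod_cast pow_ne_zero 2 (norm_ne_zero_iff.2 (by simpa using hφ))
  rw [ptraceB_smul, ptraceB_outerMat, inv_smul_eq_iff₀ hc] at hA
  rw [ptraceA_smul, ptraceA_outerMat, inv_smul_eq_iff₀ hc] at hB
  replace hB := congrArg transpose hB
  rw [transpose_transpose, transpose_smul] at hB
  exact ⟨Submodule.mem_span_singleton.2 ⟨_, hA.symm⟩, Submodule.mem_span_singleton.2 ⟨_, hB.symm⟩⟩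

def prodMulRight {R ι κ : Type*} [CommSemiring R] (b : κ → R) : (ι → R) →ₗ[R] (ι × κ → R) where
  toFun a p := a p.1 * b p.2
  map_add' a a' := by ext p; simp [add_mul]
  map_smul' c a := by ext p; simp [mul_assoc]

lemma prodMulRight_injective {R ι κ : Type*} [CommRing R] [NoZeroDivisors R] {b : κ → R}
    (hb : b ≠ 0) : Function.Injective (prodMulRight (ι := ι) b) := by
  obtain ⟨k, hk⟩ : ∃ k, b k ≠ 0 := Function.ne_iff.1 hb
  refine (injective_iff_map_eq_zero _).2 fun a ha => funext fun i => ?_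
  simpa [prodMulRight, hk] using congrFun ha (i, k)

theorem stmt17_general {r s : ℕ} (hr : 2 ≤ r) :
    ¬ ∃ (L : (Fin r × Fin s → ℂ) →ₗ[ℂ] (Fin r × Fin s → ℂ))
        (b : Fin s → ℂ) (ρA : Matrix (Fin r) (Fin r) ℂ) (ρB : Matrix (Fin s) (Fin s) ℂ),
      Function.Injective L ∧
      (∑ k, ‖b k‖ ^ 2 = 1) ∧
      ρA.PosSemidef ∧ ρA.trace = 1 ∧ ρB.PosSemidef ∧ ρB.trace = 1 ∧
      ∀ a : Fin r → ℂ, (∑ j, ‖a j‖ ^ 2 = 1) →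
        (let φ := L (fun p => a p.1 * b p.2)
         let c : ℂ := ((∑ p, ‖φ p‖ ^ 2 : ℝ) : ℂ)
         ptraceB (c⁻¹ • outerMat φ) = ρA ∧ ptraceA (c⁻¹ • outerMat φ) = ρB) := by
  rintro ⟨L, b, ρA, ρB, hL, hb, -, -, -, -, hmask⟩
  have hb0 : b ≠ 0 := by
    rintro rfl
    simp at hb
  let A : (Fin r → ℂ) →ₗ[ℂ] Matrix (Fin r) (Fin s) ℂ :=
    (LinearEquiv.curry ℂ ℂ (Fin r) (Fin s) ≪≫ₗ ofLinearEquiv ℂ).toLinearMap ∘ₗ L ∘ₗ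
      prodMulRight b
  have hA : Function.Injective A := by
    simp only [A, LinearMap.coe_comp, LinearEquiv.coe_coe]
    exact (LinearEquiv.injective _).comp (hL.comp (prodMulRight_injective hb0))
  have hunit (a : Fin r → ℂ) (ha : ∑ j, ‖a j‖ ^ 2 = 1) :
      A a * (A a)ᴴ ∈ ℂ ∙ ρA ∧ (A a)ᴴ * A a ∈ ℂ ∙ ρBᵀ :=
    mem_span_of_ptrace_inv_smul_outerMat_eq _ (hmask a ha).1 (hmask a ha).2
  refine false_of_forall_mul_conjTranspose_mem_span (by simpa using hr) A hA ρA ρBᵀ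
    (mem_of_forall_sum_norm_sq_eq_one _ ?_ fun a ha => (hunit a ha).1)
    (mem_of_forall_sum_norm_sq_eq_one _ ?_ fun a ha => (hunit a ha).2)
  all_goals
    intro c a
    simp only [map_smul, conjTranspose_smul, Matrix.smul_mul, Matrix.mul_smul, smul_smul, mul_comm]

/-- No probabilistic masking: there is no injective linear map `L` on `ℂ^r ⊗ ℂ^s`, fixed
unit state `b` and density matrices `ρA, ρB` such that for every unit `a`, the normalized
image of `a ⊗ b` has marginals `ρA` and `ρB`. -/
theorem stmt17 {r s : ℕ} (hr : 2 ≤ r) (hs : 2 ≤ s) :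
    ¬ ∃ (L : (Fin r × Fin s → ℂ) →ₗ[ℂ] (Fin r × Fin s → ℂ))
        (b : Fin s → ℂ) (ρA : Matrix (Fin r) (Fin r) ℂ) (ρB : Matrix (Fin s) (Fin s) ℂ),
      Function.Injective L ∧
      (∑ k, ‖b k‖ ^ 2 = 1) ∧
      ρA.PosSemidef ∧ ρA.trace = 1 ∧ ρB.PosSemidef ∧ ρB.trace = 1 ∧
      ∀ a : Fin r → ℂ, (∑ j, ‖a j‖ ^ 2 = 1) →
        (let φ := L (fun p => a p.1 * b p.2)
         let c : ℂ := ((∑ p, ‖φ p‖ ^ 2 : ℝ) : ℂ)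
         ptraceB (c⁻¹ • outerMat φ) = ρA ∧ ptraceA (c⁻¹ • outerMat φ) = ρB) :=
  stmt17_general hr
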